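/- Let X be a symmetric α-stable process on R^n (0 < α < 2, n ≥ 2) and let D be a bounded domain satisfying the uniform exterior cone condition. If h is a bounded function on D that is harmonic in D with respect to the killed process X^D (i.e., the process killed upon exiting D), then h is identically zero on D. -/

import Mathlib

/-!
From a point `x ∈ D` at distance `δ` from `Dᶜ`, the process leaves the ball `B(x, δ/2)` by a
jump into the exterior cone at a nearest boundary point `z` with probability at least some
`p > 0` independent of `x`. Indeed, the part of that cone inside `B(z, min δ ρ)`, with `ρ` the
radius in the cone condition, has volume of order `(min δ ρ)^n` and lies at distance between `δ`
and `2δ` from `x`, where the Poisson kernel of `B(x, δ/2)` is at least of order `δ^{-n}`; and `δ`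
is bounded since `D` is. The mean value property over that ball then gives
`|h x| ≤ (1 - p) sup_D |h|`, hence `sup_D |h| = 0`.
-/

open MeasureTheory Metric Filter Set Topology
open scoped ENNReal NNReal Topology

noncomputable section

/-- Euclidean space `ℝⁿ`. -/
abbrev EucSp (n : ℕ) := EuclideanSpace ℝ (Fin n)

variable {n : ℕ}

/-- The first exit time of a path `ω` from a set `U` (`∞` if the path never leaves `U`). -/
def exitTime (U : Set (EucSp n)) (ω : ℝ≥0 → EucSp n) : ℝ≥0∞ :=
  ⨅ s ∈ {s : ℝ≥0 | ω s ∉ U}, (s : ℝ≥0∞)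

/-- The position of the path at the exit time from `U`. -/
def exitPos (U : Set (EucSp n)) (ω : ℝ≥0 → EucSp n) : EucSp n :=
  ω (exitTime U ω).toNNReal

/-- The Poisson kernel of the ball `B(c,r)` for the rotationally symmetric `α`-stable
process (Blumenthal–Getoor–Ray):
`K(x,z) = C(n,α) ((r²-|x-c|²)/(|z-c|²-r²))^{α/2} |x-z|^{-n}` for `|z-c| > r`, `0` otherwise. -/
def stableBallKernel (n : ℕ) (α : ℝ) (c : EucSp n) (r : ℝ) (x z : EucSp n) : ℝ :=
  if r < ‖z - c‖ then
    Real.Gamma ((n : ℝ) / 2) * Real.pi ^ (-(n : ℝ) / 2 - 1) * Real.sin (Real.pi * α / 2) *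
      ((r ^ 2 - ‖x - c‖ ^ 2) / (‖z - c‖ ^ 2 - r ^ 2)) ^ (α / 2) * ‖x - z‖ ^ (-(n : ℝ))
  else 0

/-- An abstract symmetric `α`-stable process on `ℝⁿ`, described by the family of laws
`law x` on path space of the process started at `x`.  The exit distribution from any ball
is required to be given by the explicit Blumenthal–Getoor–Ray Poisson kernel, which pins
down the process. -/
structure StableProcessLaw (n : ℕ) (α : ℝ) where
  law : EucSp n → Measure (ℝ≥0 → EucSp n)
  prob : ∀ x, IsProbabilityMeasure (law x)
  start : ∀ x, law x {ω | ω 0 = x} = 1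
  ball_exit : ∀ (c : EucSp n) (r : ℝ), 0 < r → ∀ x ∈ ball c r,
    (law x).map (exitPos (ball c r)) =
      volume.withDensity fun z => ENNReal.ofReal (stableBallKernel n α c r x z)

/-- The harmonic measure of `U`: the law of `X_{τ_U}` under `P_x`. -/
def StableProcessLaw.hm {α : ℝ} (H : StableProcessLaw n α) (U : Set (EucSp n))
    (x : EucSp n) : Measure (EucSp n) :=
  (H.law x).map (exitPos U)

/-- The Green function of the (transient) symmetric `α`-stable process on `ℝⁿ`:
`G(x,y) = 2^{-α} π^{-n/2} Γ((n-α)/2) Γ(α/2)⁻¹ |x-y|^{α-n}`. -/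
def freeGreen (n : ℕ) (α : ℝ) (x y : EucSp n) : ℝ :=
  2 ^ (-α) * Real.pi ^ (-(n : ℝ) / 2) * Real.Gamma (((n : ℝ) - α) / 2) / Real.Gamma (α / 2) *
    ‖x - y‖ ^ (α - (n : ℝ))

/-- The Green function of the process killed upon leaving `D`:
`G_D(x,y) = G(x,y) - E_x[G(X_{τ_D},y)]`. -/
def killedGreen {α : ℝ} (H : StableProcessLaw n α) (D : Set (EucSp n)) (x y : EucSp n) : ℝ :=
  freeGreen n α x y - ∫ z, freeGreen n α z y ∂(H.hm D x)

/-- The Martin quotient `M_D(x,y) = G_D(x,y)/G_D(x₀,y)` with base point `x₀`. -/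
def martinQuot {α : ℝ} (H : StableProcessLaw n α) (D : Set (EucSp n)) (x₀ x y : EucSp n) : ℝ :=
  killedGreen H D x y / killedGreen H D x₀ y

/-- The Martin kernel at a boundary point `z`:
`M_D(x,z) = lim_{D ∋ y → z} G_D(x,y)/G_D(x₀,y)`. -/
def martinKernel {α : ℝ} (H : StableProcessLaw n α) (D : Set (EucSp n)) (x₀ x z : EucSp n) : ℝ :=
  limUnder (𝓝[D] z) (martinQuot H D x₀ x)

/-- A bounded domain: a bounded, open, connected set. -/
def IsBoundedDomain (D : Set (EucSp n)) : Prop :=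
  IsOpen D ∧ IsConnected D ∧ Bornology.IsBounded D

/-- A bounded Lipschitz domain: near every boundary point, after an isometric change of
coordinates, `D` is the region above the graph of a Lipschitz function (with uniform
characteristic constants `(r₀, A₀)`). -/
def IsLipschitzDomain [NeZero n] (D : Set (EucSp n)) : Prop :=
  IsBoundedDomain D ∧
  ∃ r₀ A₀ : ℝ, 0 < r₀ ∧ 0 < A₀ ∧
    ∀ z ∈ frontier D, ∃ (ψ : EucSp n ≃ₗᵢ[ℝ] EucSp n) (f : EucSp n → ℝ),
      LipschitzWith (Real.toNNReal A₀) f ∧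
      ∀ y ∈ ball z r₀,
        (y ∈ D ↔
          f (ψ (y - z) - (ψ (y - z) 0) • EuclideanSpace.single (0 : Fin n) (1 : ℝ))
            < ψ (y - z) 0)

/-- A bounded `C^{1,1}` domain: near every boundary point, after an isometric change of
coordinates, `D` is the region above the graph of a `C¹` function with Lipschitz gradient. -/
def IsC11Domain [NeZero n] (D : Set (EucSp n)) : Prop :=
  IsBoundedDomain D ∧
  ∃ r₀ : ℝ, 0 < r₀ ∧
    ∀ z ∈ frontier D, ∃ (ψ : EucSp n ≃ₗᵢ[ℝ] EucSp n) (f : EucSp n → ℝ) (M : ℝ≥0),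
      ContDiff ℝ 1 f ∧ LipschitzWith M (fderiv ℝ f) ∧
      ∀ y ∈ ball z r₀,
        (y ∈ D ↔
          f (ψ (y - z) - (ψ (y - z) 0) • EuclideanSpace.single (0 : Fin n) (1 : ℝ))
            < ψ (y - z) 0)

/-- The uniform exterior cone condition: there are `η, r > 0` such that at every boundary
point `z` there is a cone with vertex `z`, isometric to the standard cone of aperture `η`,
whose intersection with `B(z,r)` lies in `Dᶜ`. -/
def UniformExteriorCone [NeZero n] (D : Set (EucSp n)) : Prop :=
  ∃ η r : ℝ, 0 < η ∧ 0 < r ∧ ∀ z ∈ frontier D,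
    ∃ ψ : EucSp n ≃ₗᵢ[ℝ] EucSp n, ∀ y ∈ ball z r,
      (0 < ψ (y - z) 0 ∧
        ‖ψ (y - z) - (ψ (y - z) 0) • EuclideanSpace.single (0 : Fin n) (1 : ℝ)‖
          < η * ψ (y - z) 0) → y ∈ Dᶜ

/-- `h` is harmonic in `D` with respect to the whole process `X` (Definition 2.2):
continuous in `D`, locally integrable, with `∫_{|x|>1} |h(x)| |x|^{-(n+α)} dx < ∞`, and
satisfying the exact mean value property `h(x) = E_x[h(X_{τ_{B(x,r)}})]` for every ball with
closure contained in `D`. -/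
def HarmonicWrtX {α : ℝ} (H : StableProcessLaw n α) (D : Set (EucSp n))
    (h : EucSp n → ℝ) : Prop :=
  ContinuousOn h D ∧ LocallyIntegrable h volume ∧
  Integrable (fun x => |h x| * ‖x‖ ^ (-(n : ℝ) - α)) (volume.restrict {x : EucSp n | 1 < ‖x‖}) ∧
  ∀ x ∈ D, ∀ r : ℝ, 0 < r → closedBall x r ⊆ D →
    Integrable h (H.hm (ball x r) x) ∧ h x = ∫ y, h y ∂(H.hm (ball x r) x)

/-- `h` is superharmonic in `D` with respect to the whole process `X` (Definition 2.2):
lower semicontinuous in `D`, locally integrable, with `∫_{|x|>1}|h(x)||x|^{-(n+α)}dx < ∞`,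
and `h(x) ≥ E_x[h(X_{τ_{B(x,r)}})]` (in the extended sense) for every ball with closure in
`D`. -/
def SuperharmonicWrtX {α : ℝ} (H : StableProcessLaw n α) (D : Set (EucSp n))
    (h : EucSp n → ℝ) : Prop :=
  LowerSemicontinuousOn h D ∧ LocallyIntegrable h volume ∧
  Integrable (fun x => |h x| * ‖x‖ ^ (-(n : ℝ) - α)) (volume.restrict {x : EucSp n | 1 < ‖x‖}) ∧
  ∀ x ∈ D, ∀ r : ℝ, 0 < r → closedBall x r ⊆ D →
    Integrable (fun y => max (-(h y)) 0) (H.hm (ball x r) x) ∧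
    ((∫⁻ y, ENNReal.ofReal (h y) ∂(H.hm (ball x r) x) : ℝ≥0∞) : EReal)
      - ((∫⁻ y, ENNReal.ofReal (-(h y)) ∂(H.hm (ball x r) x) : ℝ≥0∞) : EReal) ≤ (h x : EReal)

/-- `h` is harmonic in `D` with respect to the killed process `X^D` (Definition 2.1):
continuous in `D`, locally integrable on `D`, with `∫_{D, |x|>1}|h(x)||x|^{-(n+α)}dx < ∞`,
and `h(x) = E_x[h(X_{τ_{B(x,r)}}); τ_{B(x,r)} < τ_D]` for every ball with closure in `D`
(the event `τ_{B(x,r)} < τ_D` being `X_{τ_{B(x,r)}} ∈ D`). -/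
def HarmonicWrtKilled {α : ℝ} (H : StableProcessLaw n α) (D : Set (EucSp n))
    (h : EucSp n → ℝ) : Prop :=
  ContinuousOn h D ∧ LocallyIntegrableOn h D volume ∧
  Integrable (fun x => |h x| * ‖x‖ ^ (-(n : ℝ) - α))
    (volume.restrict ({x : EucSp n | 1 < ‖x‖} ∩ D)) ∧
  ∀ x ∈ D, ∀ r : ℝ, 0 < r → closedBall x r ⊆ D →
    IntegrableOn h D (H.hm (ball x r) x) ∧ h x = ∫ y in D, h y ∂(H.hm (ball x r) x)

/-- `h` is superharmonic in `D` with respect to the killed process `X^D` (Definition 2.1). -/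
def SuperharmonicWrtKilled {α : ℝ} (H : StableProcessLaw n α) (D : Set (EucSp n))
    (h : EucSp n → ℝ) : Prop :=
  LowerSemicontinuousOn h D ∧ LocallyIntegrableOn h D volume ∧
  Integrable (fun x => |h x| * ‖x‖ ^ (-(n : ℝ) - α))
    (volume.restrict ({x : EucSp n | 1 < ‖x‖} ∩ D)) ∧
  ∀ x ∈ D, ∀ r : ℝ, 0 < r → closedBall x r ⊆ D →
    IntegrableOn (fun y => max (-(h y)) 0) D (H.hm (ball x r) x) ∧
    ((∫⁻ y in D, ENNReal.ofReal (h y) ∂(H.hm (ball x r) x) : ℝ≥0∞) : EReal)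
      - ((∫⁻ y in D, ENNReal.ofReal (-(h y)) ∂(H.hm (ball x r) x) : ℝ≥0∞) : EReal)
      ≤ (h x : EReal)

/-- The limit of the path at its lifetime (exit time from `D`), if it exists. -/
def pathBoundaryLimit (D : Set (EucSp n)) (ω : ℝ≥0 → EucSp n) : EucSp n :=
  limUnder (𝓝[{t : ℝ≥0 | (t : ℝ≥0∞) < exitTime D ω}] (exitTime D ω).toNNReal) ω


section DistanceToComplement

variable {E : Type*} [NormedAddCommGroup E] [NormedSpace ℝ E]

theorem exists_mem_frontier_dist_eq_infDist_compl [ProperSpace E] {D : Set E} (hD : IsOpen D)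
    (hDc : Dᶜ.Nonempty) {x : E} (hx : x ∈ D) :
    ∃ z ∈ frontier D, dist x z = infDist x Dᶜ := by
  obtain ⟨z, hzD, hxz⟩ := hD.isClosed_compl.exists_infDist_eq_dist hDc x
  have hpos : 0 < infDist x Dᶜ :=
    (hD.isClosed_compl.notMem_iff_infDist_pos hDc).1 (not_not.2 hx)
  refine ⟨z, ?_, hxz.symm⟩
  rw [hD.frontier_eq]
  refine ⟨closure_mono (ball_infDist_compl_subset (x := x)) ?_, hzD⟩
  rw [closure_ball x hpos.ne']
  exact mem_closedBall'.2 hxz.ge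

theorem Bornology.IsBounded.nonempty_compl [Nontrivial E] {D : Set E}
    (hD : Bornology.IsBounded D) : Dᶜ.Nonempty :=
  Set.nonempty_compl.2 fun h => NormedSpace.unbounded_univ ℝ E (h ▸ hD)

theorem Bornology.IsBounded.exists_pos_forall_infDist_compl_le [Nontrivial E] {D : Set E}
    (hD : Bornology.IsBounded D) : ∃ L > 0, ∀ x ∈ D, infDist x Dᶜ ≤ L := by
  obtain ⟨w, hw⟩ := hD.nonempty_compl
  obtain ⟨R, hR, hDR⟩ := hD.exists_pos_norm_le
  refine ⟨R + ‖w‖, by positivity, fun x hx => ?_⟩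
  calc infDist x Dᶜ ≤ dist x w := infDist_le_dist_of_mem hw
    _ ≤ ‖x‖ + ‖w‖ := dist_le_norm_add_norm x w
    _ ≤ R + ‖w‖ := by linarith [hDR x hx]

end DistanceToComplement

def truncatedCone (n : ℕ) [NeZero n] (η s : ℝ) : Set (EucSp n) :=
  {w | ‖w‖ < s ∧ 0 < w 0 ∧
    ‖w - (w 0) • EuclideanSpace.single (0 : Fin n) (1 : ℝ)‖ < η * w 0}

section TruncatedCone

open scoped Pointwise

variable [NeZero n]

theorem isOpen_truncatedCone (η s : ℝ) : IsOpen (truncatedCone n η s) := by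
  have hc : Continuous fun w : EucSp n => w 0 := (EuclideanSpace.proj (0 : Fin n)).continuous
  exact (isOpen_lt continuous_norm continuous_const).inter ((isOpen_lt continuous_const hc).inter
    (isOpen_lt (continuous_id.sub (hc.smul continuous_const)).norm (continuous_const.mul hc)))

theorem volume_truncatedCone_pos {η s : ℝ} (hη : 0 < η) (hs : 0 < s) :
    0 < volume (truncatedCone n η s) := by
  refine (isOpen_truncatedCone η s).measure_pos volume
    ⟨(s / 2) • EuclideanSpace.single (0 : Fin n) (1 : ℝ), ?_, ?_, ?_⟩ <;>
    simp [norm_smul, abs_of_pos hs] <;> first | linarith | positivity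

theorem volume_truncatedCone_lt_top (η s : ℝ) : volume (truncatedCone n η s) < ⊤ :=
  (measure_mono fun _ hw => mem_ball_zero_iff.2 hw.1).trans_lt measure_ball_lt_top

theorem smul_truncatedCone_subset {η s : ℝ} (hs : 0 < s) :
    s • truncatedCone n η 1 ⊆ truncatedCone n η s := by
  rintro - ⟨w, ⟨hw1, hw2, hw3⟩, rfl⟩
  have hsw : (s • w) 0 = s * w 0 := rfl
  have hsub : s • w - (s * w 0) • EuclideanSpace.single (0 : Fin n) (1 : ℝ)
      = s • (w - (w 0) • EuclideanSpace.single (0 : Fin n) (1 : ℝ)) := by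
    rw [smul_sub, mul_smul]
  refine ⟨?_, ?_, ?_⟩
  · rw [norm_smul, Real.norm_eq_abs, abs_of_pos hs]
    nlinarith
  · rw [hsw]
    positivity
  · rw [hsw, hsub, norm_smul, Real.norm_eq_abs, abs_of_pos hs]
    nlinarith

theorem ofReal_pow_mul_volume_truncatedCone_le {η s : ℝ} (hs : 0 < s) :
    ENNReal.ofReal (s ^ n) * volume (truncatedCone n η 1) ≤ volume (truncatedCone n η s) := by
  have hscale := Measure.addHaar_smul_of_nonneg volume hs.le (truncatedCone n η 1)
  rw [finrank_euclideanSpace, Fintype.card_fin] at hscale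
  exact hscale ▸ measure_mono (smul_truncatedCone_subset hs)

theorem UniformExteriorCone.exists_volume_le_compl_inter_ball {D : Set (EucSp n)}
    (hD : UniformExteriorCone D) :
    ∃ c ρ : ℝ, 0 < c ∧ 0 < ρ ∧ ∀ z ∈ frontier D, ∀ s, 0 < s → s ≤ ρ →
      ∃ S ⊆ Dᶜ ∩ ball z s, MeasurableSet S ∧ ENNReal.ofReal (c * s ^ n) ≤ volume S := by
  obtain ⟨η, ρ, hη, hρ, hcone⟩ := hD
  refine ⟨(volume (truncatedCone n η 1)).toReal, ρ,
    ENNReal.toReal_pos (volume_truncatedCone_pos hη one_pos).ne'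
      (volume_truncatedCone_lt_top η 1).ne, hρ, fun z hz s hs hsρ => ?_⟩
  obtain ⟨ψ, hψ⟩ := hcone z hz
  have hmp : MeasurePreserving (fun y => ψ (y - z)) volume volume :=
    ψ.measurePreserving.comp (measurePreserving_sub_right volume z)
  have hmeas := (isOpen_truncatedCone (n := n) η s).measurableSet
  refine ⟨(fun y => ψ (y - z)) ⁻¹' truncatedCone n η s, fun y hy => ?_,
    hmp.measurable hmeas, ?_⟩
  · have hyz : ‖y - z‖ < s := ψ.norm_map (y - z) ▸ hy.1
    exact ⟨hψ y (mem_ball_iff_norm.2 (hyz.trans_le hsρ)) hy.2, mem_ball_iff_norm.2 hyz⟩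
  · rw [hmp.measure_preimage hmeas.nullMeasurableSet, ENNReal.ofReal_mul (by positivity),
      mul_comm, ENNReal.ofReal_toReal (volume_truncatedCone_lt_top η 1).ne]
    exact ofReal_pow_mul_volume_truncatedCone_le hs

end TruncatedCone

def stableKernelConst (n : ℕ) (α : ℝ) : ℝ :=
  Real.Gamma ((n : ℝ) / 2) * Real.pi ^ (-(n : ℝ) / 2 - 1) * Real.sin (Real.pi * α / 2)

section StableKernel

variable [NeZero n] {α : ℝ}

theorem stableKernelConst_pos (hα : 0 < α) (hα2 : α < 2) : 0 < stableKernelConst n α := by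
  have hΓ : 0 < Real.Gamma ((n : ℝ) / 2) :=
    Real.Gamma_pos_of_pos (by have := NeZero.pos n; positivity)
  have hsin : 0 < Real.sin (Real.pi * α / 2) :=
    Real.sin_pos_of_pos_of_lt_pi (by positivity) (by nlinarith [Real.pi_pos])
  exact mul_pos (mul_pos hΓ (Real.rpow_pos_of_pos Real.pi_pos _)) hsin

theorem stableKernelConst_mul_le_stableBallKernel (hα : 0 < α) (hα2 : α < 2)
    {x y : EucSp n} {r b : ℝ} (hr : 0 < r) (hry : 2 * r ≤ ‖y - x‖) (hyb : ‖y - x‖ ≤ b) :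
    stableKernelConst n α * (r / b) ^ 2 / b ^ n ≤ stableBallKernel n α x r x y := by
  set d := ‖y - x‖
  have hd : 0 < d := by linarith
  have hden : 0 < d ^ 2 - r ^ 2 := by nlinarith
  set t := r ^ 2 / (d ^ 2 - r ^ 2)
  have ht0 : 0 < t := by positivity
  have ht1 : t ≤ 1 := (div_le_one hden).2 (by nlinarith)
  have hbt : (r / b) ^ 2 ≤ t ^ (α / 2) := calc
    (r / b) ^ 2 = r ^ 2 / b ^ 2 := div_pow r b 2
    _ ≤ t := div_le_div_of_nonneg_left (by positivity) hden (by nlinarith)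
    _ = t ^ (1 : ℝ) := (Real.rpow_one t).symm
    _ ≤ t ^ (α / 2) := Real.rpow_le_rpow_of_exponent_ge ht0 ht1 (by linarith)
  have hbd : (b ^ n)⁻¹ ≤ d ^ (-(n : ℝ)) := by
    rw [Real.rpow_neg hd.le, Real.rpow_natCast]
    exact inv_anti₀ (by positivity) (pow_le_pow_left₀ hd.le hyb n)
  rw [stableBallKernel, if_pos (by linarith), sub_self, norm_zero, norm_sub_rev x y,
    ← stableKernelConst, div_eq_mul_inv, show r ^ 2 - 0 ^ 2 = r ^ 2 by ring]
  have hC := stableKernelConst_pos (n := n) hα hα2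
  have hb : 0 < b := by linarith
  gcongr

end StableKernel

namespace StableProcessLaw

variable {α : ℝ} (H : StableProcessLaw n α)

instance isZeroOrProbabilityMeasure_hm (U : Set (EucSp n)) (x : EucSp n) :
    IsZeroOrProbabilityMeasure (H.hm U x) := by
  have := H.prob x
  unfold hm
  infer_instance

theorem ofReal_mul_volume_le_hm_ball {x : EucSp n} {r κ : ℝ} (hr : 0 < r)
    {S A : Set (EucSp n)} (hS : MeasurableSet S) (hSA : S ⊆ A)
    (hκ : ∀ y ∈ S, κ ≤ stableBallKernel n α x r x y) :
    ENNReal.ofReal κ * volume S ≤ H.hm (ball x r) x A := by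
  rw [hm, H.ball_exit x r hr x (mem_ball_self hr)]
  calc ENNReal.ofReal κ * volume S
      = ∫⁻ _ in S, ENNReal.ofReal κ := (setLIntegral_const S _).symm
    _ ≤ ∫⁻ y in S, ENNReal.ofReal (stableBallKernel n α x r x y) :=
        setLIntegral_mono' hS fun y hy => ENNReal.ofReal_le_ofReal (hκ y hy)
    _ = volume.withDensity (fun z => ENNReal.ofReal (stableBallKernel n α x r x z)) S :=
        (withDensity_apply _ hS).symm
    _ ≤ _ := measure_mono hSA

theorem ofReal_mul_volume_le_hm_ball_half [NeZero n] (hα : 0 < α) (hα2 : α < 2)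
    {x : EucSp n} {δ : ℝ} (hδ : 0 < δ) {S A : Set (EucSp n)} (hS : MeasurableSet S)
    (hSA : S ⊆ A) (hSx : S ⊆ closedBall x (2 * δ) \ ball x δ) :
    ENNReal.ofReal (stableKernelConst n α / 16 / (2 * δ) ^ n) * volume S ≤
      H.hm (ball x (δ / 2)) x A := by
  refine H.ofReal_mul_volume_le_hm_ball (half_pos hδ) hS hSA fun y hy => ?_
  obtain ⟨hy2, hy1⟩ := hSx hy
  rw [mem_closedBall_iff_norm] at hy2
  rw [mem_ball_iff_norm, not_lt] at hy1
  have hkernel := stableKernelConst_mul_le_stableBallKernel hα hα2 (half_pos hδ)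
    (by linarith) hy2
  rwa [show δ / 2 / (2 * δ) = 1 / 4 by field_simp; norm_num, div_pow, one_pow,
    show (4 : ℝ) ^ 2 = 16 by norm_num, mul_one_div] at hkernel

theorem exists_pos_forall_le_hm_ball_compl [NeZero n] (hα : 0 < α) (hα2 : α < 2)
    {D : Set (EucSp n)} (hDo : IsOpen D) (hDb : Bornology.IsBounded D)
    (hcone : UniformExteriorCone D) :
    ∃ p > 0, ∀ x ∈ D, ∃ r > 0, closedBall x r ⊆ D ∧
      ENNReal.ofReal p ≤ H.hm (ball x r) x Dᶜ := by
  obtain ⟨c, ρ, hc, hρ, hvol⟩ := hcone.exists_volume_le_compl_inter_ball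
  have hDc := hDb.nonempty_compl
  obtain ⟨L, hL, hδL⟩ := hDb.exists_pos_forall_infDist_compl_le
  set q := min (1 / 2) (ρ / (2 * L))
  have hC := stableKernelConst_pos (n := n) hα hα2
  refine ⟨stableKernelConst n α / 16 * q ^ n * c, by positivity, fun x hx => ?_⟩
  set δ := infDist x Dᶜ
  have hδ : 0 < δ := (hDo.isClosed_compl.notMem_iff_infDist_pos hDc).1 (not_not.2 hx)
  obtain ⟨z, hz, hxz⟩ := exists_mem_frontier_dist_eq_infDist_compl hDo hDc hx
  set s := min δ ρ
  obtain ⟨S, hSsub, hSm, hSvol⟩ := hvol z hz s (lt_min hδ hρ) (min_le_right _ _)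
  refine ⟨δ / 2, half_pos hδ,
    (closedBall_subset_ball (half_lt_self hδ)).trans ball_infDist_compl_subset, ?_⟩
  have hSx : S ⊆ closedBall x (2 * δ) \ ball x δ := fun y hy =>
    ⟨calc dist y x ≤ dist y z + dist z x := dist_triangle y z x
        _ ≤ 2 * δ := by
          rw [dist_comm z x, hxz]; linarith [mem_ball.1 (hSsub hy).2, min_le_left δ ρ],
      fun hyx => (mem_ball'.1 hyx).not_ge (infDist_le_dist_of_mem (hSsub hy).1)⟩
  have hq : q ≤ s / (2 * δ) := by
    rw [← min_div_div_right (by positivity), show δ / (2 * δ) = 1 / 2 by field_simp]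
    exact min_le_min le_rfl
      (div_le_div_of_nonneg_left hρ.le (by positivity) (by linarith [hδL x hx]))
  calc ENNReal.ofReal (stableKernelConst n α / 16 * q ^ n * c)
      ≤ ENNReal.ofReal (stableKernelConst n α / 16 / (2 * δ) ^ n) *
          ENNReal.ofReal (c * s ^ n) := by
        rw [← ENNReal.ofReal_mul (by positivity)]
        refine ENNReal.ofReal_le_ofReal ?_
        calc stableKernelConst n α / 16 * q ^ n * c
            ≤ stableKernelConst n α / 16 * (s / (2 * δ)) ^ n * c := by
              gcongr
          _ = _ := by rw [div_pow]; field_simp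
    _ ≤ ENNReal.ofReal (stableKernelConst n α / 16 / (2 * δ) ^ n) * volume S := by gcongr
    _ ≤ H.hm (ball x (δ / 2)) x Dᶜ :=
        H.ofReal_mul_volume_le_hm_ball_half hα hα2 hδ hSm (fun y hy => (hSsub hy).1) hSx

end StableProcessLaw

theorem abs_setIntegral_le_mul_one_sub {X : Type*} [MeasurableSpace X] {μ : Measure X}
    [IsZeroOrProbabilityMeasure μ] {f : X → ℝ} {D : Set X} (hD : MeasurableSet D) {M p : ℝ}
    (hM : ∀ y ∈ D, |f y| ≤ M) (hM0 : 0 ≤ M) (hp : ENNReal.ofReal p ≤ μ Dᶜ) :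
    |∫ y in D, f y ∂μ| ≤ M * (1 - p) := by
  have hpD : p ≤ μ.real Dᶜ := (ENNReal.ofReal_le_iff_le_toReal (measure_ne_top μ _)).1 hp
  have hD1 : μ.real D ≤ 1 - p := by
    linarith [measureReal_add_measureReal_compl (μ := μ) hD,
      measureReal_le_one (μ := μ) (s := univ)]
  rw [← Real.norm_eq_abs]
  calc ‖∫ y in D, f y ∂μ‖ ≤ M * μ.real D :=
        norm_setIntegral_le_of_norm_le_const (measure_lt_top μ D) hM
    _ ≤ M * (1 - p) := by gcongr

theorem eq_zero_of_forall_abs_le_mul_one_sub {X : Type*} {D : Set X} {h : X → ℝ} {p : ℝ}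
    (hp : 0 < p) (hbd : BddAbove ((fun y => |h y|) '' D))
    (hcontr : ∀ x ∈ D, ∀ M, (∀ y ∈ D, |h y| ≤ M) → |h x| ≤ M * (1 - p)) :
    ∀ x ∈ D, h x = 0 := by
  intro x hx
  set M := sSup ((fun y => |h y|) '' D)
  have hM : ∀ y ∈ D, |h y| ≤ M := fun y hy => le_csSup hbd (mem_image_of_mem _ hy)
  have hMle : M ≤ M * (1 - p) :=
    csSup_le (nonempty_of_mem (mem_image_of_mem _ hx))
      (forall_mem_image.2 fun y hy => hcontr y hy M hM)
  have hM0 : M ≤ 0 := by nlinarith [hM x hx, abs_nonneg (h x)]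
  exact abs_nonpos_iff.1 ((hM x hx).trans hM0)

theorem stmt5_general (n : ℕ) [NeZero n] (α : ℝ) (hα : 0 < α) (hα2 : α < 2)
    (H : StableProcessLaw n α)
    (D : Set (EucSp n)) (hD : IsBoundedDomain D) (hcone : UniformExteriorCone D)
    (h : EucSp n → ℝ) (hh : HarmonicWrtKilled H D h)
    (hbd : ∃ C : ℝ, ∀ x ∈ D, |h x| ≤ C) :
    ∀ x ∈ D, h x = 0 := by
  obtain ⟨hDo, -, hDb⟩ := hD
  obtain ⟨p, hp, hexit⟩ := H.exists_pos_forall_le_hm_ball_compl hα hα2 hDo hDb hcone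
  obtain ⟨C, hC⟩ := hbd
  refine eq_zero_of_forall_abs_le_mul_one_sub hp ⟨C, forall_mem_image.2 hC⟩
    fun x hx M hM => ?_
  obtain ⟨r, hr, hrD, hpx⟩ := hexit x hx
  rw [(hh.2.2.2 x hx r hr hrD).2]
  exact abs_setIntegral_le_mul_one_sub hDo.measurableSet hM ((abs_nonneg _).trans (hM x hx)) hpx

/-- **Theorem 2.4.** Let `D` be a bounded domain in `ℝⁿ` (`n ≥ 2`) satisfying the uniform
exterior cone condition, `0 < α < 2`.  If `h` is bounded on `D` and harmonic in `D` with
respect to the killed process `X^D`, then `h ≡ 0` on `D`. -/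
theorem stmt5 (n : ℕ) [NeZero n] (hn : 2 ≤ n) (α : ℝ) (hα : 0 < α) (hα2 : α < 2)
    (H : StableProcessLaw n α)
    (D : Set (EucSp n)) (hD : IsBoundedDomain D) (hcone : UniformExteriorCone D)
    (h : EucSp n → ℝ) (hh : HarmonicWrtKilled H D h)
    (hbd : ∃ C : ℝ, ∀ x ∈ D, |h x| ≤ C) :
    ∀ x ∈ D, h x = 0 :=
  stmt5_general n α hα hα2 H D hD hcone h hh hbd
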